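/- arXiv:2203.04692 — 4 statements merged into one kernel-verified Lean document; each statement's English description precedes it below -/
import Mathlib

section
/- With the optimal discriminator D* plugged in, the generator objective C(G) = E[sum_k 1{W=k} log P(W=k | X̂)] equals, up to an additive constant not depending on the conditional distribution of X̂^m given X^o and W, the quantity sum_{k=1}^K π_k E_{X^o | W=k}[ KL( p(x̂^m | x^o, W=k) || p(x̂^m | x^o) ) ]. -/
/-- Finite Kullback–Leibler divergence. -/
noncomputable def KLf {α : Type*} [Fintype α] (p q : α → ℝ) : ℝ :=
  ∑ x, p x * Real.log (p x / q x)

/-- With the optimal discriminator plugged in, the generator objective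
`C(G) = E[∑ k 1{W=k} log P(W=k | X̂)]` equals, up to an additive constant not depending
on the conditional distribution `q` of `X̂^m` given `(X^o, W)`, the quantity
`∑ k, π k * E_{X^o|W=k}[ KL( p(x̂^m|x^o,W=k) ‖ p(x̂^m|x^o) ) ]`.
Here `r` is the (fixed) joint law of `(X^o, W)` and `q o k` is the conditional pmf of
`X̂^m` given `X^o = o, W = k`. -/
theorem stmt3 {O M : Type} [Fintype O] [Fintype M] (K : ℕ) (hK : 0 < K)
    (r : O → Fin K → ℝ) (hr : ∀ o k, 0 < r o k) (hr1 : (∑ o, ∑ k, r o k) = 1) :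
    ∃ c : ℝ, ∀ q : O → Fin K → M → ℝ,
      (∀ o k m, 0 < q o k m) → (∀ o k, (∑ m, q o k m) = 1) →
      (∑ o, ∑ m, ∑ k, (r o k * q o k m) *
          Real.log ((r o k * q o k m) / ∑ k', r o k' * q o k' m))
        = c + ∑ k, (∑ o', r o' k) * ∑ o, (r o k / ∑ o', r o' k) *
            KLf (q o k) (fun m => (∑ k', r o k' * q o k' m) / ∑ k', r o k') := by
  have hO : Nonempty O := by
    by_contra h
    rw [not_nonempty_iff] at h
    simp at hr1
  have hKfin : Nonempty (Fin K) := Fin.pos_iff_nonempty.mp hK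
  refine ⟨∑ o, ∑ k, r o k * Real.log (r o k / ∑ k', r o k'), ?_⟩
  intro q hq hq1
  have hR : ∀ o : O, 0 < ∑ k', r o k' :=
    fun o => Finset.sum_pos (fun k _ => hr o k) Finset.univ_nonempty
  have hRk : ∀ k, 0 < ∑ o', r o' k :=
    fun k => Finset.sum_pos (fun o _ => hr o k) Finset.univ_nonempty
  have hS : ∀ o m, 0 < ∑ k', r o k' * q o k' m :=
    fun o m => Finset.sum_pos (fun k _ => mul_pos (hr o k) (hq o k m)) Finset.univ_nonempty
  have hrhs : ∀ k, (∑ o', r o' k) * ∑ o, (r o k / ∑ o', r o' k) *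
      KLf (q o k) (fun m => (∑ k', r o k' * q o k' m) / ∑ k', r o k')
      = ∑ o, r o k * KLf (q o k) (fun m => (∑ k', r o k' * q o k' m) / ∑ k', r o k') := by
    intro k
    rw [Finset.mul_sum]
    refine Finset.sum_congr rfl fun o _ => ?_
    rw [← mul_assoc]
    congr 1
    field_simp
    rw [mul_comm, mul_div_assoc, div_self (hRk k).ne', mul_one]
  simp only [hrhs]
  rw [Finset.sum_comm (s := Finset.univ) (t := Finset.univ)
    (f := fun k o => r o k * KLf (q o k) (fun m => (∑ k', r o k' * q o k' m) / ∑ k', r o k')),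
    ← Finset.sum_add_distrib]
  refine Finset.sum_congr rfl fun o _ => ?_
  rw [Finset.sum_comm, ← Finset.sum_add_distrib]
  refine Finset.sum_congr rfl fun k _ => ?_
  have h1 : r o k * Real.log (r o k / ∑ k', r o k')
      = ∑ m, (r o k * q o k m) * Real.log (r o k / ∑ k', r o k') := by
    rw [← Finset.sum_mul, ← Finset.mul_sum, hq1 o k, mul_one]
  rw [KLf, Finset.mul_sum, h1, ← Finset.sum_add_distrib]
  refine Finset.sum_congr rfl fun m _ => ?_
  have hr' := (hr o k).ne'
  have hq' := (hq o k m).ne'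
  have hR' := (hR o).ne'
  have hS' := (hS o m).ne'
  rw [Real.log_div (mul_ne_zero hr' hq') hS', Real.log_mul hr' hq',
      Real.log_div hr' hR', Real.log_div hq' (div_ne_zero hS' hR'),
      Real.log_div hS' hR']
  ring
end

section
/- Suppose X = (X^o, X^m) and the pattern indicator W take values in finite sets, the missing mechanism is MAR (W is conditionally independent of X^m given X^o), and pattern k=1 corresponds to full observation so that conditional on W=1 the imputed vector satisfies X̂^m = X^m. If the generator satisfies p(x̂^m | x^o, W=k) = p(x̂^m | x^o) for all k (the global-minimum condition), then p(x̂^m | x^o) = p(x^m | x^o) for all x^o with p(x^o) > 0, and hence the distribution of X̂ = (X^o, X̂^m) equals the distribution of X. -/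
/-- Theorem 2 of FragmGAN. `p` is the joint law of `(X^o, X^m, W)` and `q` the joint law
of `(X^o, X̂^m, W)`, sharing the same `(X^o, W)` marginal. Under MAR (`W ⫫ X^m | X^o`),
with pattern `⟨0, hK⟩` fully observed (so the law of `X̂^m` given `(X^o, W=1)` equals
that of `X^m`, and this pattern has positive conditional probability at every observed
`x^o`), the global-minimum condition `p(x̂^m|x^o,W=k) = p(x̂^m|x^o)` for all `k` implies
`p(x̂^m|x^o) = p(x^m|x^o)` for all `x^o` with `p(x^o) > 0`, hence `X̂ = (X^o, X̂^m)` has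
the same distribution as `X = (X^o, X^m)`. -/
theorem stmt6 {O M : Type} [Fintype O] [Fintype M] (K : ℕ) (hK : 0 < K)
    (p q : O → M → Fin K → ℝ)
    (hp0 : ∀ o m k, 0 ≤ p o m k) (hp1 : (∑ o, ∑ m, ∑ k, p o m k) = 1)
    (hq0 : ∀ o m k, 0 ≤ q o m k)
    (hmarg : ∀ o k, (∑ m, q o m k) = ∑ m, p o m k)
    (hMAR : ∀ o m k, p o m k * (∑ m', ∑ k', p o m' k') =
      (∑ k', p o m k') * (∑ m', p o m' k))
    (hfull : ∀ o m, q o m ⟨0, hK⟩ = p o m ⟨0, hK⟩)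
    (hfullpos : ∀ o, 0 < (∑ m, ∑ k, p o m k) → 0 < ∑ m, p o m ⟨0, hK⟩)
    (hglobal : ∀ o m k, q o m k * (∑ m', ∑ k', q o m' k') =
      (∑ k', q o m k') * (∑ m', q o m' k)) :
    (∀ o, 0 < (∑ m, ∑ k, p o m k) → ∀ m,
        (∑ k, q o m k) / (∑ m', ∑ k, q o m' k)
          = (∑ k, p o m k) / (∑ m', ∑ k, p o m' k)) ∧
    (∀ o m, (∑ k, q o m k) = ∑ k, p o m k) := by
  have key : ∀ o m, (∑ k, q o m k) = ∑ k, p o m k := by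
    intro o m
    have hSq : (∑ m', ∑ k', q o m' k') = ∑ m', ∑ k', p o m' k' := by
      rw [Finset.sum_comm, Finset.sum_comm (f := fun m' k' => p o m' k')]
      exact Finset.sum_congr rfl fun k _ => hmarg o k
    by_cases hS : 0 < ∑ m', ∑ k, p o m' k
    · have hP0 : 0 < ∑ m', p o m' ⟨0, hK⟩ := hfullpos o hS
      have hQ0 : (∑ m', q o m' ⟨0, hK⟩) = ∑ m', p o m' ⟨0, hK⟩ := hmarg o ⟨0, hK⟩
      have h1 := hglobal o m ⟨0, hK⟩
      have h2 := hMAR o m ⟨0, hK⟩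
      rw [hfull, hQ0, hSq] at h1
      exact mul_right_cancel₀ (ne_of_gt hP0) (h1.symm.trans h2)
    · push_neg at hS
      have hSz : (∑ m', ∑ k, p o m' k) = 0 :=
        le_antisymm hS (Finset.sum_nonneg fun m' _ => Finset.sum_nonneg fun k _ => hp0 o m' k)
      have hpz : (∑ k, p o m k) = 0 := by
        have := (Finset.sum_eq_zero_iff_of_nonneg
          (fun m' _ => Finset.sum_nonneg fun k _ => hp0 o m' k)).mp hSz
        exact this m (Finset.mem_univ m)
      have hqSz : (∑ m', ∑ k, q o m' k) = 0 := hSq.trans hSz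
      have hqz : (∑ k, q o m k) = 0 := by
        have := (Finset.sum_eq_zero_iff_of_nonneg
          (fun m' _ => Finset.sum_nonneg fun k _ => hq0 o m' k)).mp hqSz
        exact this m (Finset.mem_univ m)
      rw [hpz, hqz]
  refine ⟨fun o _ m => ?_, key⟩
  rw [key o m, Finset.sum_congr rfl fun m' _ => key o m']
end

section
/- For jointly distributed finite random variables X̂ and M ∈ {0,1}, the binary cross-entropy objective at the optimal discriminator equals, up to an additive term not depending on the conditional laws of X̂ given M, the quantity sum_{t∈{0,1}} P(M=t) KL( p(x̂ | M=t) || p(x̂) ), which is the Jensen–Shannon-type divergence between the class-conditional distributions weighted by the class priors; it is minimized (equal to the constant) iff p(x̂ | M=0) = p(x̂ | M=1). -/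
lemma key_pt (a b : ℝ) (ha : 0 ≤ a) (hb : 0 ≤ b) (h : a ≠ 0 → 0 < b) :
    a - b ≤ a * Real.log (a / b) ∧ (a * Real.log (a / b) = a - b ↔ a = b) := by
  rcases eq_or_lt_of_le ha with h0 | h0
  · simp only [← h0, zero_mul, zero_sub]
    refine ⟨by linarith, ?_⟩
    constructor <;> intro h' <;> linarith
  · have hb' := h (ne_of_gt h0)
    have h1 : Real.log (b / a) ≤ b / a - 1 := Real.log_le_sub_one_of_pos (by positivity)
    have hlog : Real.log (a / b) = - Real.log (b / a) := by
      rw [← Real.log_inv]; congr 1; field_simp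
    have h2 : a * (b / a - 1) = b - a := by field_simp
    have h3 : a * Real.log (b / a) ≤ b - a := by
      have := mul_le_mul_of_nonneg_left h1 ha; linarith
    refine ⟨by rw [hlog]; linarith, ?_, ?_⟩
    · intro heq
      by_contra hne
      have hne1 : b / a ≠ 1 := by
        intro h'; apply hne
        field_simp at h'; linarith
      have h4 := Real.log_lt_sub_one_of_pos (show (0:ℝ) < b/a by positivity) hne1
      have h5 : a * Real.log (b / a) < b - a := by
        have := mul_lt_mul_of_pos_left h4 h0; linarith
      rw [hlog] at heq; linarith
    · intro heq; subst heq
      rw [div_self (ne_of_gt h0), Real.log_one]; ring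

lemma gibbs_aux {X : Type} [Fintype X] (p m : X → ℝ)
    (hp : ∀ x, 0 ≤ p x) (hm : ∀ x, 0 ≤ m x)
    (hp1 : ∑ x, p x = 1) (hm1 : ∑ x, m x = 1)
    (hpm : ∀ x, p x ≠ 0 → 0 < m x) :
    0 ≤ KLf p m ∧ (KLf p m = 0 ↔ p = m) := by
  have hterm : ∀ x, p x - m x ≤ p x * Real.log (p x / m x) :=
    fun x => (key_pt _ _ (hp x) (hm x) (hpm x)).1
  have h0 : ∑ x, (p x - m x) = 0 := by
    rw [Finset.sum_sub_distrib, hp1, hm1]; ring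
  have hsum : (0:ℝ) ≤ KLf p m := by
    unfold KLf
    calc (0:ℝ) = ∑ x, (p x - m x) := h0.symm
    _ ≤ _ := Finset.sum_le_sum (fun x _ => hterm x)
  refine ⟨hsum, ?_, ?_⟩
  · intro hKL
    have hz : ∑ x, (p x * Real.log (p x / m x) - (p x - m x)) = 0 := by
      rw [Finset.sum_sub_distrib, h0]
      unfold KLf at hKL; rw [hKL]; ring
    have heach := (Finset.sum_eq_zero_iff_of_nonneg
      (fun x _ => by linarith [hterm x])).mp hz
    funext x
    have := heach x (Finset.mem_univ x)
    exact ((key_pt _ _ (hp x) (hm x) (hpm x)).2).mp (by linarith)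
  · intro heq; subst heq
    unfold KLf
    apply Finset.sum_eq_zero
    intro x _
    rcases eq_or_lt_of_le (hp x) with h0 | h0
    · rw [← h0, zero_mul]
    · rw [div_self (ne_of_gt h0), Real.log_one, mul_zero]

/-- The binary cross-entropy objective at the optimal discriminator equals, up to an
additive term not depending on the class-conditional laws `q t = p(x̂ | M = t)`, the
Jensen–Shannon-type divergence `∑ t, π t * KL( q t ‖ π₀ q₀ + π₁ q₁ )`; the latter is
nonnegative and vanishes iff `q false = q true`. -/
theorem stmt12 {X : Type} [Fintype X]
    (π : Bool → ℝ) (hπ : ∀ t, 0 < π t) (hπ1 : (∑ t, π t) = 1) :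
    ∃ c : ℝ, ∀ q : Bool → X → ℝ,
      (∀ t x, 0 ≤ q t x) → (∀ t, (∑ x, q t x) = 1) →
      ((∑ x, ∑ t, π t * q t x *
          Real.log ((π t * q t x) / ∑ t', π t' * q t' x))
        = c + ∑ t, π t * KLf (q t) (fun x => ∑ t', π t' * q t' x)) ∧
      (0 ≤ ∑ t, π t * KLf (q t) (fun x => ∑ t', π t' * q t' x)) ∧
      ((∑ t, π t * KLf (q t) (fun x => ∑ t', π t' * q t' x)) = 0 ↔
        q false = q true) := by
  refine ⟨∑ t, π t * Real.log (π t), ?_⟩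
  intro q hq0 hq1
  set m : X → ℝ := fun x => ∑ t', π t' * q t' x with hm
  have hm0 : ∀ x, 0 ≤ m x := fun x =>
    Finset.sum_nonneg (fun t _ => mul_nonneg (hπ t).le (hq0 t x))
  have hm1 : ∑ x, m x = 1 := by
    rw [hm, Finset.sum_comm]
    calc ∑ t, ∑ x, π t * q t x = ∑ t, π t * ∑ x, q t x := by
          simp [Finset.mul_sum]
    _ = 1 := by simp only [hq1, mul_one]; exact hπ1
  have hqm : ∀ t x, q t x ≠ 0 → 0 < m x := by
    intro t x hx
    have h1 : π t * q t x ≤ m x :=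
      Finset.single_le_sum (fun t' _ => mul_nonneg (hπ t').le (hq0 t' x)) (Finset.mem_univ t)
    have : 0 < q t x := lt_of_le_of_ne (hq0 t x) (Ne.symm hx)
    nlinarith [hπ t]
  have hgibbs : ∀ t, 0 ≤ KLf (q t) m ∧ (KLf (q t) m = 0 ↔ q t = m) :=
    fun t => gibbs_aux (q t) m (hq0 t) hm0 (hq1 t) hm1 (hqm t)
  refine ⟨?_, ?_, ?_⟩
  · -- decomposition
    have hdec : ∀ t x, π t * q t x * Real.log ((π t * q t x) / m x)
        = π t * Real.log (π t) * q t x + π t * (q t x * Real.log (q t x / m x)) := by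
      intro t x
      rcases eq_or_lt_of_le (hq0 t x) with h0 | h0
      · rw [← h0]; simp
      · have hmx := hqm t x (ne_of_gt h0)
        have hmul : (π t * q t x) / m x = π t * (q t x / m x) := by ring
        rw [hmul, Real.log_mul (ne_of_gt (hπ t)) (by positivity)]
        ring
    calc ∑ x, ∑ t, π t * q t x * Real.log ((π t * q t x) / m x)
        = ∑ t, ∑ x, (π t * Real.log (π t) * q t x
            + π t * (q t x * Real.log (q t x / m x))) := by
          rw [Finset.sum_comm]
          exact Finset.sum_congr rfl (fun t _ =>
            Finset.sum_congr rfl (fun x _ => hdec t x))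
    _ = ∑ t, (π t * Real.log (π t) * ∑ x, q t x)
          + ∑ t, π t * KLf (q t) m := by
          rw [← Finset.sum_add_distrib]
          exact Finset.sum_congr rfl (fun t _ => by
            rw [Finset.sum_add_distrib, ← Finset.mul_sum, ← Finset.mul_sum]; rfl)
    _ = (∑ t, π t * Real.log (π t)) + ∑ t, π t * KLf (q t) m := by
          simp only [hq1, mul_one]
  · exact Finset.sum_nonneg (fun t _ => mul_nonneg (hπ t).le (hgibbs t).1)
  · constructor
    · intro hz
      have heach := (Finset.sum_eq_zero_iff_of_nonneg
        (fun t _ => mul_nonneg (hπ t).le (hgibbs t).1)).mp hz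
      have hK : ∀ t, KLf (q t) m = 0 := by
        intro t
        have := heach t (Finset.mem_univ t)
        rcases mul_eq_zero.mp this with h | h
        · exact absurd h (ne_of_gt (hπ t))
        · exact h
      have hf := ((hgibbs false).2).mp (hK false)
      have ht := ((hgibbs true).2).mp (hK true)
      rw [hf, ht]
    · intro heq
      have hmq : m = q true := by
        funext x
        rw [hm]
        simp only [Fintype.sum_bool, heq]
        rw [Fintype.sum_bool] at hπ1
        linear_combination q true x * hπ1
      apply Finset.sum_eq_zero
      intro t _
      have : q t = m := by
        cases t
        · rw [hmq]; exact heq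
        · rw [hmq]
      rw [((hgibbs t).2).mpr this, mul_zero]
end

section
/- Let B be uniform on the d vectors b_i = (1,...,1,0,1,...,1) (zero in coordinate i), independent of (X̂, M) where M ∈ {0,1}^d, and define the hint H = B ⊙ M + 0.5(1 − B) coordinatewise. Then for each i, the event {H_j = m_j for j ≠ i, H_i = 0.5} equals the event {B = b_i, M_j = m_j for j ≠ i}, and consequently p(x̂ | H = h, M_i = t) = p(x̂ | M_i = t, M_j = m_j for j ≠ i) for t ∈ {0,1}. -/
open scoped Classical

/-- GAIN hint-mechanism identity. `B` is uniform on the `d` vectors `b_i` (zero exactly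
in coordinate `i`), independent of `(X̂, M)` with joint pmf `p`; the hint is
`H = B ⊙ M + 0.5 (1 - B)`, i.e. `H_j = M_j` for `j ≠ i` and `H_i = 0.5` when `B = b_i`.
Then the event `{H_j = m_j for j ≠ i, H_i = 0.5}` equals `{B = b_i, M_j = m_j for j ≠ i}`,
and consequently `p(x̂ | H = h, M_i = t) = p(x̂ | M_i = t, M_j = m_j for j ≠ i)`. -/
theorem stmt15 {X : Type} [Fintype X] (d : ℕ) (hd : 0 < d)
    (p : X → (Fin d → Bool) → ℝ) (hp0 : ∀ x mk, 0 ≤ p x mk)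
    (hp1 : (∑ x, ∑ mk, p x mk) = 1)
    (i : Fin d) (m : Fin d → Bool) (t : Bool) :
    (∀ (mk : Fin d → Bool) (i' : Fin d),
      ((fun j => if j = i' then (1 / 2 : ℝ) else (if mk j then 1 else 0))
          = (fun j => if j = i then (1 / 2 : ℝ) else (if m j then 1 else 0)))
        ↔ (i' = i ∧ ∀ j, j ≠ i → mk j = m j)) ∧
    ∀ x : X,
      (∑ mk, ∑ i' : Fin d,
          (if ((fun j => if j = i' then (1 / 2 : ℝ) else (if mk j then 1 else 0))
                = (fun j => if j = i then (1 / 2 : ℝ) else (if m j then 1 else 0)))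
              ∧ mk i = t
            then p x mk * (1 / d : ℝ) else 0)) /
      (∑ x', ∑ mk, ∑ i' : Fin d,
          (if ((fun j => if j = i' then (1 / 2 : ℝ) else (if mk j then 1 else 0))
                = (fun j => if j = i then (1 / 2 : ℝ) else (if m j then 1 else 0)))
              ∧ mk i = t
            then p x' mk * (1 / d : ℝ) else 0))
      =
      (∑ mk, (if mk i = t ∧ (∀ j, j ≠ i → mk j = m j) then p x mk else 0)) /
      (∑ x', ∑ mk, (if mk i = t ∧ (∀ j, j ≠ i → mk j = m j) then p x' mk else 0)) := by
  have key : ∀ (mk : Fin d → Bool) (i' : Fin d),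
      ((fun j => if j = i' then (1 / 2 : ℝ) else (if mk j then 1 else 0))
          = (fun j => if j = i then (1 / 2 : ℝ) else (if m j then 1 else 0)))
        ↔ (i' = i ∧ ∀ j, j ≠ i → mk j = m j) := by
    intro mk i'
    constructor
    · intro h
      have hii : i' = i := by
        by_contra hne
        have := congrFun h i'
        simp [hne] at this
        rcases Bool.eq_false_or_eq_true (m i') with hb | hb <;> simp [hb] at this <;> norm_num at this
      subst hii
      refine ⟨rfl, fun j hj => ?_⟩
      have := congrFun h j
      simp only [if_neg hj] at this
      rcases Bool.eq_false_or_eq_true (mk j) with hb | hb <;>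
        rcases Bool.eq_false_or_eq_true (m j) with hc | hc <;>
          simp [hb, hc] at this <;> try norm_num at this
      all_goals simp [hb, hc]
    · rintro ⟨h1, hmk⟩
      funext j
      by_cases hj : j = i
      · simp [hj, h1]
      · simp [h1, hj, hmk j hj]
  refine ⟨key, fun x => ?_⟩
  have hsum : ∀ q : X,
      (∑ mk, ∑ i' : Fin d,
          (if ((fun j => if j = i' then (1 / 2 : ℝ) else (if mk j then 1 else 0))
                = (fun j => if j = i then (1 / 2 : ℝ) else (if m j then 1 else 0)))
              ∧ mk i = t
            then p q mk * (1 / d : ℝ) else 0))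
      = (∑ mk, (if mk i = t ∧ (∀ j, j ≠ i → mk j = m j) then p q mk else 0)) * (1 / d : ℝ) := by
    intro q
    rw [Finset.sum_mul]
    refine Finset.sum_congr rfl fun mk _ => ?_
    simp_rw [key]
    by_cases hA : mk i = t ∧ (∀ j, j ≠ i → mk j = m j)
    · have h1 : ∀ i' : Fin d, (((i' = i ∧ ∀ j, j ≠ i → mk j = m j) ∧ mk i = t) ↔ i' = i) :=
        fun i' => ⟨fun h => h.1.1, fun h => ⟨⟨h, hA.2⟩, hA.1⟩⟩
      simp_rw [h1]
      simp only [Finset.sum_ite_eq', Finset.mem_univ, if_true]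
      rw [if_pos hA]
    · rw [if_neg hA, zero_mul]
      refine Finset.sum_eq_zero fun i' _ => ?_
      rw [if_neg]
      rintro ⟨⟨rfl, h2⟩, h3⟩
      exact hA ⟨h3, h2⟩
  rw [hsum]
  have : (∑ x', ∑ mk, ∑ i' : Fin d,
          (if ((fun j => if j = i' then (1 / 2 : ℝ) else (if mk j then 1 else 0))
                = (fun j => if j = i then (1 / 2 : ℝ) else (if m j then 1 else 0)))
              ∧ mk i = t
            then p x' mk * (1 / d : ℝ) else 0))
      = (∑ x', ∑ mk, (if mk i = t ∧ (∀ j, j ≠ i → mk j = m j) then p x' mk else 0)) * (1 / d : ℝ) := by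
    rw [Finset.sum_mul]
    exact Finset.sum_congr rfl fun x' _ => hsum x'
  rw [this, mul_div_mul_right]
  positivity
end
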